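/- arXiv:2011.07540 — 2 statements merged into one kernel-verified Lean document; each statement's English description precedes it below -/
import Mathlib

section
/- Let k ∈ ℤ, let m ≥ 1 and ℓ be integers, and let g : ℍ → ℂ be twice continuously differentiable (as a function of (u, v) with τ = u + iv) with Δ_{k−1/2} g = 0 on ℍ. Define h : ℍ → ℂ by h(τ) := g(−τ̄). Then the function Φ(τ, z) := h(τ) ϑ_{m,ℓ}(τ, z) satisfies (C^sk_{k,m} Φ)(τ, z) = 0 for all (τ, z) ∈ ℍ × ℂ. -/
/-!
The `r`-th summand `e(r²τ/(4m) + rz)` of `ϑ_{m,ℓ}` has second `z`-derivative `8πim` times its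
`τ`-derivative, so `ϑ_{m,ℓ}` is holomorphic in `τ` and solves the heat equation
`∂²_z ϑ = 8πim ∂_τ ϑ`; hence `L_m(hϑ) = 8πim (∂_τ h) ϑ`. For `h(τ) = g(-τ̄)` one has
`∂_τ h = -(∂_τ̄ g)(-τ̄)`, and `∂_τ̄` kills `ϑ`, so everything reduces to `∂_τ̄ (v^κ (∂_τ̄ g)(-τ̄))`
with `κ = k - 1/2`. As `g` is `C²`, its second derivative is symmetric, so
`Δ_κ = -4v² ∂_τ ∂_τ̄ + 2iκv ∂_τ̄`, which turns that expression into `v^(κ-2)/4 · (Δ_κ g)(-τ̄) = 0`.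
-/

open Complex ComplexConjugate

/-- The Jacobi theta function `ϑ_{m,ℓ}(τ, z) = Σ_{r ∈ ℤ, r ≡ ℓ mod 2m} e(r²τ/(4m) + rz)`. -/
noncomputable def jacobiThetaML (m ℓ : ℤ) (τ z : ℂ) : ℂ :=
  ∑' r : {r : ℤ // r ≡ ℓ [ZMOD 2 * m]},
    Complex.exp (2 * Real.pi * Complex.I *
      (((r : ℤ) : ℂ) ^ 2 * τ / (4 * m) + ((r : ℤ) : ℂ) * z))

/-- Real partial derivative of `f : ℂ → ℂ` at `τ` in the direction `w`. -/
noncomputable def partialDeriv (w : ℂ) (f : ℂ → ℂ) (τ : ℂ) : ℂ := fderiv ℝ f τ w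

/-- Wirtinger derivative `∂_τ f = (1/2)(∂f/∂u − i ∂f/∂v)` where `τ = u + iv`. -/
noncomputable def dTau (f : ℂ → ℂ) : ℂ → ℂ :=
  fun τ => (1 / 2) * (partialDeriv 1 f τ - Complex.I * partialDeriv Complex.I f τ)

/-- Wirtinger derivative `∂_τ̄ f = (1/2)(∂f/∂u + i ∂f/∂v)` where `τ = u + iv`. -/
noncomputable def dTauBar (f : ℂ → ℂ) : ℂ → ℂ :=
  fun τ => (1 / 2) * (partialDeriv 1 f τ + Complex.I * partialDeriv Complex.I f τ)

/-- The heat operator `L_m = 8πim ∂_τ − ∂²/∂z²` acting on `Φ(τ, z)`. -/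
noncomputable def heatOp (m : ℤ) (Φ : ℂ → ℂ → ℂ) (τ z : ℂ) : ℂ :=
  8 * Real.pi * Complex.I * (m : ℂ) * dTau (fun w => Φ w z) τ - iteratedDeriv 2 (Φ τ) z

/-- The skew Casimir operator
`C^sk_{k,m} = −(iv²/(πm)) v^{1/2−k} ∘ ∂_τ̄ ∘ v^{k−1/2} ∘ L_m`, `v = Im τ`. -/
noncomputable def skewCasimir (k m : ℤ) (Φ : ℂ → ℂ → ℂ) (τ z : ℂ) : ℂ :=
  -(Complex.I * (τ.im : ℂ) ^ 2 / (Real.pi * m)) *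
    ((τ.im ^ ((1 : ℝ) / 2 - (k : ℝ)) : ℝ) : ℂ) *
    dTauBar (fun w => ((w.im ^ ((k : ℝ) - 1 / 2) : ℝ) : ℂ) * heatOp m Φ w z) τ

/-- The weight-`κ` hyperbolic Laplacian
`Δ_κ = −v²(∂²/∂u² + ∂²/∂v²) + iκv(∂/∂u + i ∂/∂v)`, `τ = u + iv`. -/
noncomputable def hypLaplacian (κ : ℝ) (f : ℂ → ℂ) (τ : ℂ) : ℂ :=
  -(τ.im : ℂ) ^ 2 *
      (partialDeriv 1 (partialDeriv 1 f) τ +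
        partialDeriv Complex.I (partialDeriv Complex.I f) τ) +
    Complex.I * (κ : ℂ) * (τ.im : ℂ) *
      (partialDeriv 1 f τ + Complex.I * partialDeriv Complex.I f τ)

open Filter Topology
open scoped Real

section Wirtinger

variable {f g : ℂ → ℂ} {τ : ℂ}

lemma partialDeriv_add (hf : DifferentiableAt ℝ f τ) (hg : DifferentiableAt ℝ g τ) (e : ℂ) :
    partialDeriv e (fun w => f w + g w) τ = partialDeriv e f τ + partialDeriv e g τ := by
  simp [partialDeriv, fderiv_fun_add hf hg]

lemma partialDeriv_const_mul (hf : DifferentiableAt ℝ f τ) (c e : ℂ) :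
    partialDeriv e (fun w => c * f w) τ = c * partialDeriv e f τ := by
  simp [partialDeriv, fderiv_const_mul hf c]

lemma partialDeriv_mul (hf : DifferentiableAt ℝ f τ) (hg : DifferentiableAt ℝ g τ) (e : ℂ) :
    partialDeriv e (fun w => f w * g w) τ
      = partialDeriv e f τ * g τ + f τ * partialDeriv e g τ := by
  simp [partialDeriv, fderiv_fun_mul hf hg]
  ring

lemma partialDeriv_partialDeriv (hf : DifferentiableAt ℝ (fderiv ℝ f) τ) (e e' : ℂ) :
    partialDeriv e (partialDeriv e' f) τ = fderiv ℝ (fderiv ℝ f) τ e e' := by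
  change fderiv ℝ (fun t => fderiv ℝ f t e') τ e = _
  simp [fderiv_clm_apply hf (differentiableAt_const e')]

lemma partialDeriv_eq_mul_deriv (hf : DifferentiableAt ℂ f τ) (e : ℂ) :
    partialDeriv e f τ = e * deriv f τ := by
  simp [partialDeriv, hf.hasDerivAt.hasFDerivAt.restrictScalars ℝ |>.fderiv]

lemma hasFDerivAt_neg_conj (τ : ℂ) :
    HasFDerivAt (fun w : ℂ => -conj w) (-conjCLE.toContinuousLinearMap : ℂ →L[ℝ] ℂ) τ :=
  (-conjCLE.toContinuousLinearMap).hasFDerivAt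

lemma partialDeriv_comp_neg_conj (hf : DifferentiableAt ℝ f (-conj τ)) (e : ℂ) :
    partialDeriv e (fun w => f (-conj w)) τ = -partialDeriv (conj e) f (-conj τ) := by
  have h : HasFDerivAt (fun w => f (-conj w)) _ τ := hf.hasFDerivAt.comp τ (hasFDerivAt_neg_conj τ)
  simp [partialDeriv, h.fderiv]

lemma dTau_mul (hf : DifferentiableAt ℝ f τ) (hg : DifferentiableAt ℝ g τ) :
    dTau (fun w => f w * g w) τ = dTau f τ * g τ + f τ * dTau g τ := by
  simp only [dTau, partialDeriv_mul hf hg]; ring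

lemma dTauBar_mul (hf : DifferentiableAt ℝ f τ) (hg : DifferentiableAt ℝ g τ) :
    dTauBar (fun w => f w * g w) τ = dTauBar f τ * g τ + f τ * dTauBar g τ := by
  simp only [dTauBar, partialDeriv_mul hf hg]; ring

lemma dTau_eq_deriv (hf : DifferentiableAt ℂ f τ) : dTau f τ = deriv f τ := by
  simp only [dTau, partialDeriv_eq_mul_deriv hf, ← mul_assoc, I_mul_I]; ring

lemma dTauBar_eq_zero_of_differentiableAt (hf : DifferentiableAt ℂ f τ) : dTauBar f τ = 0 := by
  simp only [dTauBar, partialDeriv_eq_mul_deriv hf, ← mul_assoc, I_mul_I]; ring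

lemma Filter.EventuallyEq.dTauBar_eq (h : f =ᶠ[𝓝 τ] g) : dTauBar f τ = dTauBar g τ := by
  simp only [dTauBar, partialDeriv, h.fderiv_eq]

lemma dTau_comp_neg_conj (hf : DifferentiableAt ℝ f (-conj τ)) :
    dTau (fun w => f (-conj w)) τ = -dTauBar f (-conj τ) := by
  simp only [dTau, dTauBar, partialDeriv_comp_neg_conj hf, map_one, conj_I]
  simp only [partialDeriv, map_neg]
  ring

lemma dTauBar_comp_neg_conj (hf : DifferentiableAt ℝ f (-conj τ)) :
    dTauBar (fun w => f (-conj w)) τ = -dTau f (-conj τ) := by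
  simp only [dTau, dTauBar, partialDeriv_comp_neg_conj hf, map_one, conj_I]
  simp only [partialDeriv, map_neg]
  ring

lemma differentiableAt_dTauBar (hf : DifferentiableAt ℝ (fderiv ℝ f) τ) :
    DifferentiableAt ℝ (dTauBar f) τ := by
  unfold dTauBar partialDeriv
  fun_prop

lemma differentiableAt_dTauBar_comp_neg_conj (hf : DifferentiableAt ℝ (fderiv ℝ f) (-conj τ)) :
    DifferentiableAt ℝ (fun w => dTauBar f (-conj w)) τ :=
  DifferentiableAt.comp (g := dTauBar f) τ (differentiableAt_dTauBar hf)
    (hasFDerivAt_neg_conj τ).differentiableAt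

lemma hasFDerivAt_ofReal_im_rpow (s : ℝ) (hτ : 0 < τ.im) :
    HasFDerivAt (fun w : ℂ => ((w.im ^ s : ℝ) : ℂ))
      (ofRealCLM.comp ((s * τ.im ^ (s - 1)) • imCLM)) τ :=
  ofRealCLM.hasFDerivAt.comp τ <|
    (Real.hasDerivAt_rpow_const (Or.inl hτ.ne')).comp_hasFDerivAt τ imCLM.hasFDerivAt

lemma dTauBar_ofReal_im_rpow (s : ℝ) (hτ : 0 < τ.im) :
    dTauBar (fun w : ℂ => ((w.im ^ s : ℝ) : ℂ)) τ = I / 2 * ((s * τ.im ^ (s - 1) : ℝ) : ℂ) := by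
  simp [dTauBar, partialDeriv, (hasFDerivAt_ofReal_im_rpow s hτ).fderiv]
  ring

lemma partialDeriv_dTauBar (hf : DifferentiableAt ℝ (fderiv ℝ f) τ) (e : ℂ) :
    partialDeriv e (dTauBar f) τ
      = 1 / 2 * (fderiv ℝ (fderiv ℝ f) τ e 1 + I * fderiv ℝ (fderiv ℝ f) τ e I) := by
  have hd : ∀ e', DifferentiableAt ℝ (partialDeriv e' f) τ := fun e' => by
    unfold partialDeriv; fun_prop
  rw [← partialDeriv_partialDeriv hf, ← partialDeriv_partialDeriv hf,
    ← partialDeriv_const_mul (hd I), ← partialDeriv_add (hd 1) ((hd I).const_mul I),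
    ← partialDeriv_const_mul (f := fun w => partialDeriv 1 f w + I * partialDeriv I f w)
      ((hd 1).add ((hd I).const_mul I))]
  rfl

lemma hypLaplacian_eq (κ : ℝ) (hf : ContDiffAt ℝ 2 f τ) :
    hypLaplacian κ f τ
      = -4 * (τ.im : ℂ) ^ 2 * dTau (dTauBar f) τ + 2 * I * κ * τ.im * dTauBar f τ := by
  have hf' : DifferentiableAt ℝ (fderiv ℝ f) τ :=
    (hf.fderiv_right (m := 1) le_rfl).differentiableAt one_ne_zero
  have hsymm := (hf.isSymmSndFDerivAt (by simp)) 1 I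
  simp only [hypLaplacian, dTau, dTauBar, partialDeriv_dTauBar hf', partialDeriv_partialDeriv hf',
    hsymm]
  linear_combination (-(τ.im : ℂ) ^ 2 * fderiv ℝ (fderiv ℝ f) τ I I) * I_sq

lemma dTauBar_ofReal_im_rpow_mul_dTauBar_comp_neg_conj (s : ℝ) (hτ : 0 < τ.im)
    (hf : ContDiffAt ℝ 2 f (-conj τ)) :
    dTauBar (fun w => ((w.im ^ s : ℝ) : ℂ) * dTauBar f (-conj w)) τ
      = ((τ.im ^ (s - 2) : ℝ) : ℂ) / 4 * hypLaplacian s f (-conj τ) := by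
  have hf' : DifferentiableAt ℝ (fderiv ℝ f) (-conj τ) :=
    (hf.fderiv_right (m := 1) le_rfl).differentiableAt one_ne_zero
  rw [dTauBar_mul (hasFDerivAt_ofReal_im_rpow s hτ).differentiableAt
      (differentiableAt_dTauBar_comp_neg_conj hf'),
    dTauBar_ofReal_im_rpow s hτ, dTauBar_comp_neg_conj (differentiableAt_dTauBar hf'),
    hypLaplacian_eq s hf]
  have hs : τ.im ^ s = τ.im ^ (s - 2) * τ.im ^ 2 := by
    rw [← Real.rpow_natCast, ← Real.rpow_add hτ]; norm_num
  have hs1 : τ.im ^ (s - 1) = τ.im ^ (s - 2) * τ.im := by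
    rw [← Real.rpow_add_one hτ.ne']; ring_nf
  simp only [neg_im, conj_im, neg_neg, hs, hs1]
  push_cast
  ring

end Wirtinger

lemma hasDerivAt_tsum_of_summable_norm {ι : Type*} {F : ι → ℂ → ℂ} {U : Set ℂ} {u : ι → ℝ}
    {z : ℂ} (hu : Summable u) (hF : ∀ i, DifferentiableOn ℂ (F i) U) (hU : IsOpen U)
    (hF_le : ∀ i, ∀ w ∈ U, ‖F i w‖ ≤ u i) (hz : z ∈ U) :
    HasDerivAt (fun w => ∑' i, F i w) (∑' i, deriv (F i) z) z := by
  rw [(hasSum_deriv_of_summable_norm hu hF hU hF_le hz).tsum_eq]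
  exact ((differentiableOn_tsum_of_summable_norm hu hF hU hF_le).differentiableAt
    (hU.mem_nhds hz)).hasDerivAt

lemma hasDerivAt_jacobiTheta₂_term_fst (n : ℤ) (z τ : ℂ) :
    HasDerivAt (jacobiTheta₂_term n · τ) (2 * π * I * n * jacobiTheta₂_term n z τ) z := by
  have h := (((hasDerivAt_id z).const_mul (2 * π * I * n)).add_const
    (π * I * n ^ 2 * τ)).cexp
  simpa [jacobiTheta₂_term, mul_comm] using h

lemma hasDerivAt_jacobiTheta₂_term_snd (n : ℤ) (z τ : ℂ) :
    HasDerivAt (fun τ => jacobiTheta₂_term n z τ) (π * I * n ^ 2 * jacobiTheta₂_term n z τ) τ := by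
  have h := (((hasDerivAt_id τ).const_mul (π * I * n ^ 2)).const_add
    (2 * π * I * n * z)).cexp
  simpa [jacobiTheta₂_term, mul_comm] using h

noncomputable def partialJacobiTheta₂ (p : ℤ → Prop) (z τ : ℂ) : ℂ :=
  ∑' r : {r : ℤ // p r}, jacobiTheta₂_term r z τ

section PartialJacobiTheta

variable (p : ℤ → Prop)

lemma summable_pow_mul_jacobiTheta₂_term_bound_subtype (S : ℝ) {T : ℝ} (hT : 0 < T) (k : ℕ) :
    Summable fun r : {r : ℤ // p r} =>
      (|(r : ℤ)| ^ k : ℝ) * Real.exp (-π * (T * (r : ℤ) ^ 2 - 2 * S * |(r : ℤ)|)) :=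
  (summable_pow_mul_jacobiTheta₂_term_bound S hT k).comp_injective Subtype.val_injective

lemma hasDerivAt_partialJacobiTheta₂_snd (z : ℂ) {τ : ℂ} (hτ : 0 < τ.im) :
    HasDerivAt (partialJacobiTheta₂ p z)
      (∑' r : {r : ℤ // p r}, π * I * (r : ℤ) ^ 2 * jacobiTheta₂_term r z τ) τ := by
  have hT : 0 < τ.im / 2 := by positivity
  have h := hasDerivAt_tsum_of_summable_norm (U := {w | τ.im / 2 < w.im})
    (summable_pow_mul_jacobiTheta₂_term_bound_subtype p |z.im| hT 0)
    (fun r w _ => (hasDerivAt_jacobiTheta₂_term_snd r z w).differentiableAt.differentiableWithinAt)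
    (isOpen_lt continuous_const continuous_im)
    (fun r w hw => by simpa using norm_jacobiTheta₂_term_le hT le_rfl (le_of_lt hw) r)
    (half_lt_self hτ)
  simp only [(hasDerivAt_jacobiTheta₂_term_snd _ z τ).deriv] at h
  exact h

lemma hasDerivAt_tsum_pow_mul_jacobiTheta₂_term_fst (j : ℕ) {τ : ℂ} (hτ : 0 < τ.im) (z : ℂ) :
    HasDerivAt (fun z => ∑' r : {r : ℤ // p r}, (2 * π * I * r) ^ j * jacobiTheta₂_term r z τ)
      (∑' r : {r : ℤ // p r}, (2 * π * I * r) ^ (j + 1) * jacobiTheta₂_term r z τ) z := by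
  set S := |z.im| + 1
  have h := hasDerivAt_tsum_of_summable_norm (U := {z' | |z'.im| < S}) (z := z)
    ((summable_pow_mul_jacobiTheta₂_term_bound_subtype p S hτ j).mul_left ((2 * π) ^ j))
    (fun r z' _ => (((hasDerivAt_jacobiTheta₂_term_fst r z' τ).const_mul
      ((2 * π * I * r) ^ j)).differentiableAt.differentiableWithinAt))
    (isOpen_lt (continuous_abs.comp continuous_im) continuous_const)
    (fun r z' hz' => by
      have hnorm : ‖(2 * π * I * ((r : ℤ) : ℂ)) ^ j * jacobiTheta₂_term r z' τ‖
          = (2 * π) ^ j * (((|(r : ℤ)| : ℤ) : ℝ) ^ j * ‖jacobiTheta₂_term r z' τ‖) := by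
        simp [abs_of_pos Real.pi_pos]
        ring
      rw [hnorm]
      gcongr
      exact norm_jacobiTheta₂_term_le hτ (le_of_lt hz') le_rfl r)
    (by simp [S])
  convert h using 1
  refine tsum_congr fun r => ?_
  rw [((hasDerivAt_jacobiTheta₂_term_fst r z τ).const_mul _).deriv]
  ring

lemma iteratedDeriv_two_partialJacobiTheta₂ {τ : ℂ} (hτ : 0 < τ.im) (z : ℂ) :
    iteratedDeriv 2 (partialJacobiTheta₂ p · τ) z
      = 4 * π * I * deriv (partialJacobiTheta₂ p z) τ := by
  have h0 : deriv (partialJacobiTheta₂ p · τ)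
      = fun z => ∑' r : {r : ℤ // p r}, (2 * π * I * r) ^ 1 * jacobiTheta₂_term r z τ :=
    funext fun z => by
      simpa [partialJacobiTheta₂] using
        (hasDerivAt_tsum_pow_mul_jacobiTheta₂_term_fst p 0 hτ z).deriv
  rw [iteratedDeriv_succ, iteratedDeriv_one, h0,
    (hasDerivAt_tsum_pow_mul_jacobiTheta₂_term_fst p 1 hτ z).deriv,
    (hasDerivAt_partialJacobiTheta₂_snd p z hτ).deriv, ← tsum_mul_left]
  exact tsum_congr fun r => by ring

end PartialJacobiTheta

section JacobiThetaML

variable {m : ℤ} (ℓ : ℤ)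

lemma jacobiThetaML_eq_partialJacobiTheta₂ (τ z : ℂ) :
    jacobiThetaML m ℓ τ z = partialJacobiTheta₂ (· ≡ ℓ [ZMOD 2 * m]) z (τ / (2 * m)) := by
  refine tsum_congr fun r => ?_
  rw [jacobiTheta₂_term]
  ring_nf

lemma im_div_two_mul_pos (hm : 0 < m) {τ : ℂ} (hτ : 0 < τ.im) : 0 < (τ / (2 * m)).im := by
  have : (0 : ℝ) < m := by exact_mod_cast hm
  rw [show (2 * m : ℂ) = ((2 * m : ℝ) : ℂ) by push_cast; rfl, div_ofReal_im]
  positivity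

lemma hasDerivAt_jacobiThetaML_fst (hm : 0 < m) (z : ℂ) {τ : ℂ} (hτ : 0 < τ.im) :
    HasDerivAt (fun w => jacobiThetaML m ℓ w z)
      (deriv (partialJacobiTheta₂ (· ≡ ℓ [ZMOD 2 * m]) z) (τ / (2 * m)) / (2 * m)) τ := by
  have h := (hasDerivAt_partialJacobiTheta₂_snd (· ≡ ℓ [ZMOD 2 * m]) z
    (im_div_two_mul_pos hm hτ)).differentiableAt.hasDerivAt.comp τ
      ((hasDerivAt_id τ).div_const (2 * m))
  simp only [jacobiThetaML_eq_partialJacobiTheta₂]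
  rw [div_eq_mul_one_div]
  exact h

lemma differentiableAt_jacobiThetaML_fst (hm : 0 < m) (z : ℂ) {τ : ℂ} (hτ : 0 < τ.im) :
    DifferentiableAt ℂ (fun w => jacobiThetaML m ℓ w z) τ :=
  (hasDerivAt_jacobiThetaML_fst ℓ hm z hτ).differentiableAt

lemma iteratedDeriv_two_jacobiThetaML (hm : 0 < m) {τ : ℂ} (hτ : 0 < τ.im) (z : ℂ) :
    iteratedDeriv 2 (jacobiThetaML m ℓ τ) z
      = 8 * π * I * m * deriv (fun w => jacobiThetaML m ℓ w z) τ := by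
  have hm0 : (m : ℂ) ≠ 0 := Int.cast_ne_zero.mpr hm.ne'
  rw [(hasDerivAt_jacobiThetaML_fst ℓ hm z hτ).deriv,
    funext (jacobiThetaML_eq_partialJacobiTheta₂ ℓ τ),
    iteratedDeriv_two_partialJacobiTheta₂ _ (im_div_two_mul_pos hm hτ)]
  field_simp
  ring

lemma heatOp_mul_jacobiThetaML (hm : 0 < m) {h : ℂ → ℂ} {τ : ℂ} (hτ : 0 < τ.im)
    (hh : DifferentiableAt ℝ h τ) (z : ℂ) :
    heatOp m (fun w z => h w * jacobiThetaML m ℓ w z) τ z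
      = 8 * π * I * m * dTau h τ * jacobiThetaML m ℓ τ z := by
  have hϑ := differentiableAt_jacobiThetaML_fst ℓ hm z hτ
  rw [heatOp, dTau_mul hh (hϑ.restrictScalars ℝ), dTau_eq_deriv hϑ, iteratedDeriv_const_mul_field,
    iteratedDeriv_two_jacobiThetaML ℓ hm hτ]
  ring

lemma heatOp_comp_neg_conj_mul_jacobiThetaML (hm : 0 < m) {g : ℂ → ℂ} {τ : ℂ} (hτ : 0 < τ.im)
    (hg : DifferentiableAt ℝ g (-conj τ)) (z : ℂ) :
    heatOp m (fun w z => g (-conj w) * jacobiThetaML m ℓ w z) τ z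
      = -(8 * π * I * m) * jacobiThetaML m ℓ τ z * dTauBar g (-conj τ) := by
  rw [heatOp_mul_jacobiThetaML (h := fun w => g (-conj w)) ℓ hm hτ
      (hg.comp τ (hasFDerivAt_neg_conj τ).differentiableAt),
    dTau_comp_neg_conj hg]
  ring

end JacobiThetaML

/-- If `g` is twice continuously differentiable on `ℍ` with `Δ_{k−1/2} g = 0`, and
`h(τ) := g(−τ̄)`, then `Φ(τ, z) := h(τ) ϑ_{m,ℓ}(τ, z)` is annihilated by the skew
Casimir operator `C^sk_{k,m}` on `ℍ × ℂ`. -/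
theorem skewCasimir_of_harmonic (k m ℓ : ℤ) (hm : 1 ≤ m) (g : ℂ → ℂ)
    (hg : ContDiffOn ℝ 2 g {τ : ℂ | 0 < τ.im})
    (hΔ : ∀ τ : ℂ, 0 < τ.im → hypLaplacian ((k : ℝ) - 1 / 2) g τ = 0) :
    ∀ τ z : ℂ, 0 < τ.im →
      skewCasimir k m (fun w z => g (-(conj w)) * jacobiThetaML m ℓ w z) τ z = 0 := by
  intro τ z hτ
  have hm₀ : 0 < m := by omega
  have hℍ : IsOpen {w : ℂ | 0 < w.im} := isOpen_lt continuous_const continuous_im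
  have hgℍ : ∀ w : ℂ, 0 < w.im → ContDiffAt ℝ 2 g (-conj w) := fun w hw =>
    hg.contDiffAt (hℍ.mem_nhds (by simpa using hw))
  have hg' : DifferentiableAt ℝ (fderiv ℝ g) (-conj τ) :=
    ((hgℍ τ hτ).fderiv_right (m := 1) le_rfl).differentiableAt one_ne_zero
  have hheat : (fun w => ((w.im ^ ((k : ℝ) - 1 / 2) : ℝ) : ℂ) *
        heatOp m (fun w z => g (-conj w) * jacobiThetaML m ℓ w z) w z)
      =ᶠ[𝓝 τ] fun w => (-(8 * π * I * m) * jacobiThetaML m ℓ w z) *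
        (((w.im ^ ((k : ℝ) - 1 / 2) : ℝ) : ℂ) * dTauBar g (-conj w)) := by
    filter_upwards [hℍ.mem_nhds hτ] with w hw
    rw [heatOp_comp_neg_conj_mul_jacobiThetaML ℓ hm₀ hw ((hgℍ w hw).differentiableAt two_ne_zero)]
    ring
  have hinner : DifferentiableAt ℝ
      (fun w => ((w.im ^ ((k : ℝ) - 1 / 2) : ℝ) : ℂ) * dTauBar g (-conj w)) τ :=
    (hasFDerivAt_ofReal_im_rpow _ hτ).differentiableAt.mul
      (differentiableAt_dTauBar_comp_neg_conj hg')
  have hϑ := (differentiableAt_jacobiThetaML_fst ℓ hm₀ z hτ).const_mul (-(8 * π * I * m))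
  rw [skewCasimir, hheat.dTauBar_eq, dTauBar_mul (hϑ.restrictScalars ℝ) hinner,
    dTauBar_eq_zero_of_differentiableAt hϑ,
    dTauBar_ofReal_im_rpow_mul_dTauBar_comp_neg_conj _ hτ (hgℍ τ hτ),
    hΔ _ (by simpa using hτ)]
  simp
end

section
/- Let m ≥ 1 be an integer, let a : ℤ × ℝ_{>0} → ℂ, and let c : ℤ × ℤ → ℂ satisfy c(n + λr + mλ², r + 2mλ) = c(n, r) for all n, r, λ ∈ ℤ. Fix τ ∈ ℍ and z ∈ ℂ with v = Im τ, and suppose the double series Σ_{(n,r) ∈ ℤ×ℤ} c(n, r) a(r² − 4mn, v) exp(2πi(nτ + rz)) converges absolutely. Then Σ_{(n,r) ∈ ℤ×ℤ} c(n, r) a(r² − 4mn, v) exp(2πi(nτ + rz)) = Σ_{ℓ=0}^{2m−1} h_ℓ(τ) ϑ_{m,ℓ}(τ, z), where h_ℓ(τ) := Σ_{N ∈ ℤ, N ≡ −ℓ² (mod 4m)} c((N + ℓ²)/(4m), ℓ) a(−N, v) exp(2πiNτ/(4m)) (these series also converge absolutely). -/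
open Complex

/-!
Every `(n, r) ∈ ℤ²` is uniquely of the form `(j + ℓk + mk², ℓ + 2mk)` with `0 ≤ ℓ < 2m` and
`j, k ∈ ℤ`. This change of variables preserves the discriminant, `r² - 4mn = ℓ² - 4mj`, and by the
invariance hypothesis also the coefficient, `c(n, r) = c(j, ℓ)`. Writing
`nτ + rz = (4mn - r²)τ/(4m) + (r²τ/(4m) + rz)`, the `(ℓ, j, k)`-th term therefore factors as the
term of `h_ℓ` at `N = 4mj - ℓ²` times the term of `ϑ_{m,ℓ}` at `r = ℓ + 2mk`, and absolute
convergence splits each double sum over `(j, k)` into the product `h_ℓ(τ) ϑ_{m,ℓ}(τ, z)`.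
-/

section ProductSums

variable {ι κ R : Type*} [NormedRing R] [NormMulClass R]

theorem summable_norm_left_of_summable_norm_mul {f : ι → R} {g : κ → R}
    (h : Summable fun p : ι × κ => ‖f p.1 * g p.2‖) {k : κ} (hk : g k ≠ 0) :
    Summable fun i => ‖f i‖ := by
  have hslice := h.prod_symm.prod_factor k
  simp only [Prod.fst_swap, Prod.snd_swap, norm_mul] at hslice
  exact (summable_mul_right_iff (norm_ne_zero_iff.2 hk)).1 hslice

theorem summable_norm_right_of_summable_norm_mul {f : ι → R} {g : κ → R}
    (h : Summable fun p : ι × κ => ‖f p.1 * g p.2‖) {i : ι} (hi : f i ≠ 0) :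
    Summable fun k => ‖g k‖ := by
  have hslice := h.prod_factor i
  simp only [norm_mul] at hslice
  exact (summable_mul_left_iff (norm_ne_zero_iff.2 hi)).1 hslice

theorem tsum_prod_mul_eq_tsum_mul_tsum [CompleteSpace R] {f : ι → R} {g : κ → R}
    (h : Summable fun p : ι × κ => ‖f p.1 * g p.2‖) :
    ∑' p : ι × κ, f p.1 * g p.2 = (∑' i, f i) * ∑' k, g k := by
  rcases eq_or_ne f 0 with rfl | hf
  · simp
  rcases eq_or_ne g 0 with rfl | hg
  · simp
  obtain ⟨i, hi⟩ := Function.ne_iff.1 hf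
  obtain ⟨k, hk⟩ := Function.ne_iff.1 hg
  exact (tsum_mul_tsum_of_summable_norm (summable_norm_left_of_summable_norm_mul h hk)
    (summable_norm_right_of_summable_norm_mul h hi)).symm

end ProductSums

def Int.equivModEq (d b : ℤ) (hd : d ≠ 0) : ℤ ≃ {x : ℤ // x ≡ b [ZMOD d]} where
  toFun k := ⟨b + d * k, Int.modEq_iff_dvd.2 ⟨-k, by ring⟩⟩
  invFun x := ((x : ℤ) - b) / d
  left_inv k := by simp [Int.mul_ediv_cancel_left _ hd]
  right_inv x := by
    obtain ⟨t, ht⟩ := Int.modEq_iff_dvd.1 x.2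
    ext
    simp only [show (x : ℤ) - b = d * -t by linarith, Int.mul_ediv_cancel_left _ hd]
    linarith

def ellipticEquiv (m : ℤ) (hm : 0 < m) : Fin (2 * m).toNat × ℤ × ℤ ≃ ℤ × ℤ where
  toFun q := (q.2.1 + q.1 * q.2.2 + m * q.2.2 ^ 2, q.1 + 2 * m * q.2.2)
  invFun p :=
    (⟨(p.2 % (2 * m)).toNat, by
        have := Int.emod_lt_of_pos p.2 (by omega : 0 < 2 * m)
        omega⟩,
      p.1 - p.2 % (2 * m) * (p.2 / (2 * m)) - m * (p.2 / (2 * m)) ^ 2, p.2 / (2 * m))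
  left_inv := by
    rintro ⟨l, j, k⟩
    obtain ⟨hdiv, hmod⟩ : (l + 2 * m * k) / (2 * m) = k ∧ (l + 2 * m * k) % (2 * m) = l :=
      (Int.ediv_emod_unique (by omega)).2 ⟨rfl, Int.natCast_nonneg l, by have := l.2; omega⟩
    ext
    · simp [hmod]
    · simp only [hdiv, hmod]
      ring
    · simp [hdiv]
  right_inv := by
    rintro ⟨n, r⟩
    have hr := Int.emod_add_mul_ediv r (2 * m)
    have h₀ := Int.emod_nonneg r (by omega : 2 * m ≠ 0)
    ext
    · simp only [Int.toNat_of_nonneg h₀]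
      ring
    · simpa only [Int.toNat_of_nonneg h₀] using hr

section Terms

variable (m : ℤ) (a : ℤ → ℝ → ℂ) (c : ℤ × ℤ → ℂ) (τ z : ℂ)

noncomputable def jacobiFormTerm (p : ℤ × ℤ) : ℂ :=
  c p * a (p.2 ^ 2 - 4 * m * p.1) τ.im *
    exp (2 * Real.pi * I * ((p.1 : ℂ) * τ + (p.2 : ℂ) * z))

noncomputable def thetaCoeffTerm (l N : ℤ) : ℂ :=
  c ((N + l ^ 2) / (4 * m), l) * a (-N) τ.im * exp (2 * Real.pi * I * ((N : ℂ) * τ / (4 * m)))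

noncomputable def thetaTerm (r : ℤ) : ℂ :=
  exp (2 * Real.pi * I * ((r : ℂ) ^ 2 * τ / (4 * m) + (r : ℂ) * z))

variable {m}

theorem exp_eq_mul_thetaTerm (hm : m ≠ 0) (n r : ℤ) :
    exp (2 * Real.pi * I * ((n : ℂ) * τ + (r : ℂ) * z)) =
      exp (2 * Real.pi * I * (((4 * m * n - r ^ 2 : ℤ) : ℂ) * τ / (4 * m))) * thetaTerm m τ z r := by
  have hmC : (m : ℂ) ≠ 0 := Int.cast_ne_zero.2 hm
  rw [thetaTerm, ← exp_add]
  congr 1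
  push_cast
  field_simp
  ring

theorem jacobiFormTerm_shift (hm : m ≠ 0)
    (hc : ∀ n r l : ℤ, c (n + l * r + m * l ^ 2, r + 2 * m * l) = c (n, r)) (l j k : ℤ) :
    jacobiFormTerm m a c τ z (j + l * k + m * k ^ 2, l + 2 * m * k) =
      thetaCoeffTerm m a c τ l (-l ^ 2 + 4 * m * j) * thetaTerm m τ z (l + 2 * m * k) := by
  have hcoeff : c (j + l * k + m * k ^ 2, l + 2 * m * k) = c (j, l) := by
    rw [← hc j l k, mul_comm k l]
  have hj : (-l ^ 2 + 4 * m * j + l ^ 2) / (4 * m) = j := by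
    rw [neg_add_cancel_comm, Int.mul_ediv_cancel_left _ (by positivity)]
  have hdisc : (l + 2 * m * k) ^ 2 - 4 * m * (j + l * k + m * k ^ 2) = l ^ 2 - 4 * m * j := by ring
  rw [jacobiFormTerm, thetaCoeffTerm, exp_eq_mul_thetaTerm τ z hm, hcoeff, hj, hdisc,
    show 4 * m * (j + l * k + m * k ^ 2) - (l + 2 * m * k) ^ 2 = -l ^ 2 + 4 * m * j by ring,
    neg_add_eq_sub, neg_sub]
  ring

end Terms

theorem theta_decomposition_general (m : ℤ) (hm : 1 ≤ m) (a : ℤ → ℝ → ℂ) (c : ℤ × ℤ → ℂ)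
    (hc : ∀ n r l : ℤ, c (n + l * r + m * l ^ 2, r + 2 * m * l) = c (n, r))
    (τ : ℂ) (z : ℂ)
    (hsum : Summable fun p : ℤ × ℤ =>
      ‖c p * a (p.2 ^ 2 - 4 * m * p.1) τ.im *
        Complex.exp (2 * Real.pi * Complex.I * ((p.1 : ℂ) * τ + (p.2 : ℂ) * z))‖) :
    (∀ l : ℕ, l < (2 * m).toNat →
      Summable fun N : {N : ℤ // N ≡ -(l : ℤ) ^ 2 [ZMOD 4 * m]} =>
        ‖c (((N : ℤ) + (l : ℤ) ^ 2) / (4 * m), (l : ℤ)) * a (-(N : ℤ)) τ.im *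
          Complex.exp (2 * Real.pi * Complex.I * (((N : ℤ) : ℂ) * τ / (4 * m)))‖) ∧
    ∑' p : ℤ × ℤ,
        c p * a (p.2 ^ 2 - 4 * m * p.1) τ.im *
          Complex.exp (2 * Real.pi * Complex.I * ((p.1 : ℂ) * τ + (p.2 : ℂ) * z)) =
      ∑ l ∈ Finset.range (2 * m).toNat,
        (∑' N : {N : ℤ // N ≡ -(l : ℤ) ^ 2 [ZMOD 4 * m]},
            c (((N : ℤ) + (l : ℤ) ^ 2) / (4 * m), (l : ℤ)) * a (-(N : ℤ)) τ.im *
              Complex.exp (2 * Real.pi * Complex.I * (((N : ℤ) : ℂ) * τ / (4 * m)))) *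
          jacobiThetaML m (l : ℤ) τ z := by
  have hm₀ : 0 < m := hm
  let E := ellipticEquiv m hm₀
  let F (l : ℤ) (j : ℤ) : ℂ :=
    thetaCoeffTerm m a c τ l (Int.equivModEq (4 * m) (-l ^ 2) (by omega) j)
  let G (l : ℤ) (k : ℤ) : ℂ := thetaTerm m τ z (Int.equivModEq (2 * m) l (by omega) k)
  have hterm (l : Fin (2 * m).toNat) (jk : ℤ × ℤ) :
      jacobiFormTerm m a c τ z (E (l, jk)) = F l jk.1 * G l jk.2 :=
    jacobiFormTerm_shift a c τ z hm₀.ne' hc l jk.1 jk.2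
  have hsumE : Summable fun q => ‖jacobiFormTerm m a c τ z (E q)‖ :=
    E.summable_iff.2 hsum
  have hslice (l : Fin (2 * m).toNat) : Summable fun jk : ℤ × ℤ => ‖F l jk.1 * G l jk.2‖ := by
    simpa only [hterm] using hsumE.prod_factor l
  have hF (l : Fin (2 * m).toNat) : Summable fun j => ‖F l j‖ :=
    summable_norm_left_of_summable_norm_mul (hslice l) (k := 0) (exp_ne_zero _)
  refine ⟨fun l hl => (Int.equivModEq _ _ _).summable_iff.1 (hF ⟨l, hl⟩), ?_⟩
  calc ∑' p, jacobiFormTerm m a c τ z p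
      = ∑ l : Fin (2 * m).toNat, ∑' jk : ℤ × ℤ, F l jk.1 * G l jk.2 := by
        rw [← E.tsum_eq, hsumE.of_norm.tsum_prod, tsum_fintype]
        simp only [hterm]
    _ = ∑ l : Fin (2 * m).toNat, (∑' j, F l j) * ∑' k, G l k :=
        Finset.sum_congr rfl fun l _ => tsum_prod_mul_eq_tsum_mul_tsum (hslice l)
    _ = _ := by
        rw [Fin.sum_univ_eq_sum_range (fun l : ℕ => (∑' j, F l j) * ∑' k, G l k)]
        refine Finset.sum_congr rfl fun l _ => congr_arg₂ (· * ·) ?_ ?_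
        · exact (Int.equivModEq _ _ _).tsum_eq (thetaCoeffTerm m a c τ l ·)
        · exact (Int.equivModEq _ _ _).tsum_eq (thetaTerm m τ z ·)

/-- Theta decomposition: if the coefficients `c(n, r)` satisfy the elliptic invariance,
then `Σ_{n,r} c(n,r) a(r² − 4mn, v) e(nτ + rz) = Σ_{ℓ=0}^{2m−1} h_ℓ(τ) ϑ_{m,ℓ}(τ, z)` with
`h_ℓ(τ) = Σ_{N ≡ −ℓ² (4m)} c((N + ℓ²)/(4m), ℓ) a(−N, v) e(Nτ/(4m))`,
all series converging absolutely. -/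
theorem theta_decomposition (m : ℤ) (hm : 1 ≤ m) (a : ℤ → ℝ → ℂ) (c : ℤ × ℤ → ℂ)
    (hc : ∀ n r l : ℤ, c (n + l * r + m * l ^ 2, r + 2 * m * l) = c (n, r))
    (τ : ℂ) (hτ : 0 < τ.im) (z : ℂ)
    (hsum : Summable fun p : ℤ × ℤ =>
      ‖c p * a (p.2 ^ 2 - 4 * m * p.1) τ.im *
        Complex.exp (2 * Real.pi * Complex.I * ((p.1 : ℂ) * τ + (p.2 : ℂ) * z))‖) :
    (∀ l : ℕ, l < (2 * m).toNat →
      Summable fun N : {N : ℤ // N ≡ -(l : ℤ) ^ 2 [ZMOD 4 * m]} =>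
        ‖c (((N : ℤ) + (l : ℤ) ^ 2) / (4 * m), (l : ℤ)) * a (-(N : ℤ)) τ.im *
          Complex.exp (2 * Real.pi * Complex.I * (((N : ℤ) : ℂ) * τ / (4 * m)))‖) ∧
    ∑' p : ℤ × ℤ,
        c p * a (p.2 ^ 2 - 4 * m * p.1) τ.im *
          Complex.exp (2 * Real.pi * Complex.I * ((p.1 : ℂ) * τ + (p.2 : ℂ) * z)) =
      ∑ l ∈ Finset.range (2 * m).toNat,
        (∑' N : {N : ℤ // N ≡ -(l : ℤ) ^ 2 [ZMOD 4 * m]},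
            c (((N : ℤ) + (l : ℤ) ^ 2) / (4 * m), (l : ℤ)) * a (-(N : ℤ)) τ.im *
              Complex.exp (2 * Real.pi * Complex.I * (((N : ℤ) : ℂ) * τ / (4 * m)))) *
          jacobiThetaML m (l : ℤ) τ z :=
  theta_decomposition_general m hm a c hc τ z hsum
end
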